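/- arXiv:2311.03087 — 7 statements merged into one kernel-verified Lean document; each statement's English description precedes it below -/
import Mathlib

section
/- Assume additionally that 0 < μ_l < 2 for all l ≥ 2 (G connected and non-bipartite). Then for all vertices i, j, the naive effective resistance equals the sum of all squared diffusion distances at half-integer times: d̃^eff_ij = (1/vol(G)) · Σ_{t=0}^∞ d^diff_ij(t/2)², where the series converges. -/
open Finset

/-! Each spectral term is a geometric series in `t` with ratio `1 - μ_l ∈ (-1, 1)`, summing to
`1 / μ_l`. -/

theorem hasSum_one_sub_pow_mul {m : ℝ} (hm0 : 0 < m) (hm2 : m < 2) (c : ℝ) :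
    HasSum (fun t : ℕ => (1 - m) ^ t * c) (1 / m * c) := by
  have hratio : ‖1 - m‖ < 1 := by
    rw [Real.norm_eq_abs, abs_lt]
    constructor <;> linarith
  simpa [one_div] using (hasSum_geometric_of_norm_lt_one hratio).mul_right c

theorem hasSum_sum_one_sub_pow_mul {ι : Type*} (s : Finset ι) {μ : ι → ℝ}
    (hμpos : ∀ l ∈ s, 0 < μ l) (hμlt2 : ∀ l ∈ s, μ l < 2) (c : ι → ℝ) :
    HasSum (fun t : ℕ => ∑ l ∈ s, (1 - μ l) ^ t * c l) (∑ l ∈ s, 1 / μ l * c l) :=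
  hasSum_sum fun l hl => hasSum_one_sub_pow_mul (hμpos l hl) (hμlt2 l hl) (c l)

theorem naive_effective_resistance_eq_tsum_diffusion_general
    (n : ℕ) [NeZero n]
    (deg : Fin n → ℝ) (hdegpos : ∀ i, 0 < deg i)
    (vol : ℝ) (hvol : vol = ∑ i, deg i)
    (u : Fin n → Fin n → ℝ) (μ : Fin n → ℝ)
    (hμpos : ∀ l, l ≠ 0 → 0 < μ l) (hμlt2 : ∀ l, l ≠ 0 → μ l < 2)
    (i j : Fin n)
    -- squared diffusion distance at time `t/2`
    (ddiffsq : ℕ → ℝ)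
    (hddiffsq : ∀ t, ddiffsq t = vol * ∑ l ∈ Finset.univ.filter (fun l : Fin n => l ≠ 0),
      (1 - μ l) ^ t * (u l i / Real.sqrt (deg i) - u l j / Real.sqrt (deg j)) ^ 2)
    -- naive effective resistance
    (dnaive : ℝ)
    (hdnaive : dnaive = ∑ l ∈ Finset.univ.filter (fun l : Fin n => l ≠ 0),
      (1 / μ l) * (u l i / Real.sqrt (deg i) - u l j / Real.sqrt (deg j)) ^ 2) :
    HasSum (fun t : ℕ => (1 / vol) * ddiffsq t) dnaive := by
  have hvol_ne : vol ≠ 0 := by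
    rw [hvol]
    exact (sum_pos (fun i _ => hdegpos i) univ_nonempty).ne'
  have hspectral := hasSum_sum_one_sub_pow_mul (univ.filter fun l : Fin n => l ≠ 0)
    (fun l hl => hμpos l (mem_filter.1 hl).2) (fun l hl => hμlt2 l (mem_filter.1 hl).2)
    (fun l => (u l i / Real.sqrt (deg i) - u l j / Real.sqrt (deg j)) ^ 2)
  rw [hdnaive]
  convert hspectral using 2 with t
  rw [hddiffsq t, one_div, inv_mul_cancel_left₀ hvol_ne]

/-- For a connected, non-bipartite weighted graph (`0 < μ_l < 2` for `l ≠ 0`),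
the naive effective resistance equals the (convergent) sum of all squared diffusion distances at
half-integer times: `d̃^eff_ij = (1/vol G) · Σ_{t=0}^∞ d^diff_ij(t/2)²`. -/
theorem naive_effective_resistance_eq_tsum_diffusion
    (n : ℕ) (hn : 2 ≤ n) [NeZero n]
    (A : Matrix (Fin n) (Fin n) ℝ) (hAsymm : A.IsSymm) (hAnonneg : ∀ i j, 0 ≤ A i j)
    (deg : Fin n → ℝ) (hdeg : ∀ i, deg i = ∑ j, A i j) (hdegpos : ∀ i, 0 < deg i)
    (vol : ℝ) (hvol : vol = ∑ i, deg i)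
    (Lsym : Matrix (Fin n) (Fin n) ℝ)
    (hL : Lsym = 1 - (Matrix.diagonal fun i => (Real.sqrt (deg i))⁻¹) * A *
      (Matrix.diagonal fun i => (Real.sqrt (deg i))⁻¹))
    (u : Fin n → Fin n → ℝ) (μ : Fin n → ℝ)
    (hortho : ∀ l m, ∑ i, u l i * u m i = if l = m then (1 : ℝ) else 0)
    (heig : ∀ l, Lsym.mulVec (u l) = μ l • u l)
    (hmono : Monotone μ) (hμ0 : μ 0 = 0)
    (hu0 : ∀ i, u 0 i = Real.sqrt (deg i) / Real.sqrt vol)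
    (hμpos : ∀ l, l ≠ 0 → 0 < μ l) (hμlt2 : ∀ l, l ≠ 0 → μ l < 2)
    (i j : Fin n)
    -- squared diffusion distance at time `t/2`
    (ddiffsq : ℕ → ℝ)
    (hddiffsq : ∀ t, ddiffsq t = vol * ∑ l ∈ Finset.univ.filter (fun l : Fin n => l ≠ 0),
      (1 - μ l) ^ t * (u l i / Real.sqrt (deg i) - u l j / Real.sqrt (deg j)) ^ 2)
    -- naive effective resistance
    (dnaive : ℝ)
    (hdnaive : dnaive = ∑ l ∈ Finset.univ.filter (fun l : Fin n => l ≠ 0),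
      (1 / μ l) * (u l i / Real.sqrt (deg i) - u l j / Real.sqrt (deg j)) ^ 2) :
    HasSum (fun t : ℕ => (1 / vol) * ddiffsq t) dnaive :=
  naive_effective_resistance_eq_tsum_diffusion_general n deg hdegpos vol hvol u μ hμpos hμlt2 i j
    ddiffsq hddiffsq dnaive hdnaive
end

section
/- Assume additionally that 0 < μ_l < 2 for all l ≥ 2 (G connected and non-bipartite). Define the (symd version of) diffusion pseudotime between vertices i and j by d^dpt_ij = ‖e^dpt_i − e^dpt_j‖, where e^dpt_i ∈ ℝ^{n−1} has coordinates e^dpt_i(l) = ((1−μ_l)/μ_l) · u_{l,i}/√d_i for l = 2, …, n. Then for all vertices i, j: (d^dpt_ij)² = (1/vol(G)) · Σ_{t=1}^∞ (t−1) · d^diff_ij(t/2)², where the series converges. -/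
open Finset

/-!
In the eigenbasis everything diagonalises: with `c_l = (u_{l,i}/√d_i − u_{l,j}/√d_j)²`, the
`t`-th term of the series is `Σ_{l ≠ 0} t (1 − μ_l)^(t+1) c_l` and
`(d^dpt_ij)² = Σ_{l ≠ 0} ((1 − μ_l)/μ_l)² c_l`. Since `|1 − μ_l| < 1`, each eigenvalue contributes
the series `Σ_t t x^(t+1) = (x/(1 − x))²` at `x = 1 − μ_l`.
-/

theorem hasSum_coe_mul_pow_succ {𝕜 : Type*} [NormedField 𝕜] [CompleteSpace 𝕜] {x : 𝕜}
    (hx : ‖x‖ < 1) : HasSum (fun t : ℕ => (t : 𝕜) * x ^ (t + 1)) ((x / (1 - x)) ^ 2) := by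
  have h := (hasSum_coe_mul_geometric_of_norm_lt_one hx).mul_left x
  rw [show x * (x / (1 - x) ^ 2) = (x / (1 - x)) ^ 2 by rw [div_pow]; ring] at h
  exact h.congr_fun fun t => by ring

theorem hasSum_coe_mul_one_sub_pow_succ {μ : ℝ} (hμ0 : 0 < μ) (hμ2 : μ < 2) :
    HasSum (fun t : ℕ => (t : ℝ) * (1 - μ) ^ (t + 1)) (((1 - μ) / μ) ^ 2) := by
  have hx : ‖1 - μ‖ < 1 := by
    rw [Real.norm_eq_abs, abs_lt]
    constructor <;> linarith
  simpa using hasSum_coe_mul_pow_succ hx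

theorem diffusion_pseudotime_eq_tsum_diffusion_general
    (n : ℕ) [NeZero n]
    (deg : Fin n → ℝ) (hdegpos : ∀ i, 0 < deg i)
    (vol : ℝ) (hvol : vol = ∑ i, deg i)
    (u : Fin n → Fin n → ℝ) (μ : Fin n → ℝ)
    (hμpos : ∀ l, l ≠ 0 → 0 < μ l) (hμlt2 : ∀ l, l ≠ 0 → μ l < 2)
    (i j : Fin n)
    -- squared diffusion distance at time `t/2`
    (ddiffsq : ℕ → ℝ)
    (hddiffsq : ∀ t, ddiffsq t = vol * ∑ l ∈ Finset.univ.filter (fun l : Fin n => l ≠ 0),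
      (1 - μ l) ^ t * (u l i / Real.sqrt (deg i) - u l j / Real.sqrt (deg j)) ^ 2)
    -- diffusion pseudotime embedding ("symd" version)
    (edpt : Fin n → EuclideanSpace ℝ {l : Fin n // l ≠ 0})
    (hedpt : ∀ i' (l : {l : Fin n // l ≠ 0}),
      edpt i' l = ((1 - μ l.1) / μ l.1) * (u l.1 i' / Real.sqrt (deg i')))
    (dpt : ℝ) (hdpt : dpt = ‖edpt i - edpt j‖) :
    HasSum (fun t : ℕ => (1 / vol) * (((t : ℝ) + 1) - 1) * ddiffsq (t + 1)) (dpt ^ 2) := by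
  have hvol_ne : vol ≠ 0 := hvol ▸ (sum_pos (fun k _ => hdegpos k) univ_nonempty).ne'
  set c : Fin n → ℝ := fun l => (u l i / Real.sqrt (deg i) - u l j / Real.sqrt (deg j)) ^ 2
  have hdpt_sq : dpt ^ 2 = ∑ l ∈ univ.filter (· ≠ 0), ((1 - μ l) / μ l) ^ 2 * c l := by
    rw [hdpt, EuclideanSpace.real_norm_sq_eq,
      sum_subtype (univ.filter (· ≠ 0)) (p := (· ≠ 0)) (by simp)]
    refine sum_congr rfl fun l _ => ?_
    rw [WithLp.ofLp_sub, Pi.sub_apply, hedpt, hedpt]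
    ring
  have hterm : ∀ t : ℕ, (1 / vol) * (((t : ℝ) + 1) - 1) * ddiffsq (t + 1)
      = ∑ l ∈ univ.filter (· ≠ 0), (t : ℝ) * (1 - μ l) ^ (t + 1) * c l := fun t => by
    rw [hddiffsq, mul_sum, mul_sum]
    refine sum_congr rfl fun l _ => ?_
    field_simp
    ring
  rw [hdpt_sq, funext hterm]
  refine hasSum_sum fun l hl => ?_
  have hl0 : l ≠ 0 := (mem_filter.1 hl).2
  exact (hasSum_coe_mul_one_sub_pow_succ (hμpos l hl0) (hμlt2 l hl0)).mul_right (c l)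

/-- For a connected, non-bipartite weighted graph (`0 < μ_l < 2` for `l ≠ 0`),
the squared ("symd" version of) diffusion pseudotime
`d^dpt_ij = ‖e^dpt_i − e^dpt_j‖`, with `e^dpt_i(l) = ((1−μ_l)/μ_l) · u_{l,i}/√(d_i)`, equals
the (convergent) series `(1/vol G) · Σ_{t=1}^∞ (t−1) · d^diff_ij(t/2)²`. -/
theorem diffusion_pseudotime_eq_tsum_diffusion
    (n : ℕ) (hn : 2 ≤ n) [NeZero n]
    (A : Matrix (Fin n) (Fin n) ℝ) (hAsymm : A.IsSymm) (hAnonneg : ∀ i j, 0 ≤ A i j)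
    (deg : Fin n → ℝ) (hdeg : ∀ i, deg i = ∑ j, A i j) (hdegpos : ∀ i, 0 < deg i)
    (vol : ℝ) (hvol : vol = ∑ i, deg i)
    (Lsym : Matrix (Fin n) (Fin n) ℝ)
    (hL : Lsym = 1 - (Matrix.diagonal fun i => (Real.sqrt (deg i))⁻¹) * A *
      (Matrix.diagonal fun i => (Real.sqrt (deg i))⁻¹))
    (u : Fin n → Fin n → ℝ) (μ : Fin n → ℝ)
    (hortho : ∀ l m, ∑ i, u l i * u m i = if l = m then (1 : ℝ) else 0)
    (heig : ∀ l, Lsym.mulVec (u l) = μ l • u l)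
    (hmono : Monotone μ) (hμ0 : μ 0 = 0)
    (hu0 : ∀ i, u 0 i = Real.sqrt (deg i) / Real.sqrt vol)
    (hμpos : ∀ l, l ≠ 0 → 0 < μ l) (hμlt2 : ∀ l, l ≠ 0 → μ l < 2)
    (i j : Fin n)
    -- squared diffusion distance at time `t/2`
    (ddiffsq : ℕ → ℝ)
    (hddiffsq : ∀ t, ddiffsq t = vol * ∑ l ∈ Finset.univ.filter (fun l : Fin n => l ≠ 0),
      (1 - μ l) ^ t * (u l i / Real.sqrt (deg i) - u l j / Real.sqrt (deg j)) ^ 2)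
    -- diffusion pseudotime embedding ("symd" version)
    (edpt : Fin n → EuclideanSpace ℝ {l : Fin n // l ≠ 0})
    (hedpt : ∀ i' (l : {l : Fin n // l ≠ 0}),
      edpt i' l = ((1 - μ l.1) / μ l.1) * (u l.1 i' / Real.sqrt (deg i')))
    (dpt : ℝ) (hdpt : dpt = ‖edpt i - edpt j‖) :
    HasSum (fun t : ℕ => (1 / vol) * (((t : ℝ) + 1) - 1) * ddiffsq (t + 1)) (dpt ^ 2) :=
  diffusion_pseudotime_eq_tsum_diffusion_general n deg hdegpos vol hvol u μ hμpos hμlt2 i j ddiffsq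
    hddiffsq edpt hedpt dpt hdpt
end

section
/- Let x_1, …, x_n be n pairwise distinct points in ℝ^{d'} and let, for each d ≥ d', ι_d : ℝ^{d'} → ℝ^d be an isometric embedding. For each d, let ε_{1,d}, …, ε_{n,d} be jointly independent random vectors each distributed as N(0, σ²I_d) with σ > 0, and set Δ_{i,j,d} = ‖ι_d(x_i) + ε_{i,d} − (ι_d(x_j) + ε_{j,d})‖. Then for each pair i ≠ j, the sequence Δ_{i,j,d}/√d converges to √2·σ in probability as d → ∞. -/
/-!
Put `v = ι_d(x_i) - ι_d(x_j)` and `Z = ε_{i,d} - ε_{j,d}`. The coordinates of `Z` are independent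
`N(0, 2σ²)`, so `‖v + Z‖² = ∑ₖ (vₖ + Zₖ)²` is a sum of `d` independent terms of mean `vₖ² + 2σ²`
and variance at most `8 vₖ² · 2σ² + 2 E[Zₖ⁴]`. As `‖v‖ = ‖x_i - x_j‖` does not grow with `d`,
Chebyshev's inequality bounds the probability that `‖v + Z‖²` deviates from `2σ² d` by `c² d / 2`
by `O(1/d)`. Finally, for `a, b ≥ 0`, `|a - b| > c` forces `|a² - b²| > c²`, which transfers the
concentration of `‖v + Z‖² / d` around `2σ²` to that of `‖v + Z‖ / √d` around `√2 σ`.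
-/

open MeasureTheory ProbabilityTheory Filter
open scoped Topology NNReal

lemma sq_lt_abs_sq_sub_sq_of_lt_abs_sub {a b c : ℝ} (ha : 0 ≤ a) (hb : 0 ≤ b) (hc : 0 ≤ c)
    (h : c < |a - b|) : c ^ 2 < |a ^ 2 - b ^ 2| :=
  calc c ^ 2 < |a - b| * |a - b| := by nlinarith
    _ ≤ |a - b| * (a + b) := by gcongr; exact abs_sub_le_iff.2 ⟨by linarith, by linarith⟩
    _ = |a ^ 2 - b ^ 2| := by rw [← abs_of_nonneg (add_nonneg ha hb), ← abs_mul]; ring_nf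

lemma sq_mul_div_two_le_abs_sq_sub {a c d r s : ℝ} (ha : 0 ≤ a) (hc : 0 ≤ c) (hd : 0 < d)
    (hs : 0 ≤ s) (hr : |r| ≤ c ^ 2 * d / 2) (h : c < |a / √d - √s|) :
    c ^ 2 * d / 2 ≤ |a ^ 2 - (r + d * s)| := by
  have h₁ := sq_lt_abs_sq_sub_sq_of_lt_abs_sub (by positivity) (Real.sqrt_nonneg s) hc h
  rw [div_pow, Real.sq_sqrt hd.le, Real.sq_sqrt hs] at h₁
  have h₂ : c ^ 2 * d < |a ^ 2 - d * s| := by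
    calc c ^ 2 * d < |a ^ 2 / d - s| * d := by gcongr
      _ = |a ^ 2 - d * s| := by
        rw [← abs_of_pos hd, ← abs_mul, abs_of_pos hd]; congr 1; field_simp
  have h₃ := abs_sub_abs_le_abs_sub (a ^ 2 - d * s) r
  rw [show a ^ 2 - d * s - r = a ^ 2 - (r + d * s) by ring] at h₃
  linarith

lemma MeasureTheory.MemLp.integrable_pow_four {α : Type*} {_ : MeasurableSpace α} {μ : Measure α}
    {f : α → ℝ} (hf : MemLp f 4 μ) : Integrable (fun x => f x ^ 4) μ := by
  simpa [Even.pow_abs ⟨2, rfl⟩] using hf.integrable_norm_pow (by norm_num)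

namespace ProbabilityTheory

lemma integral_sq_gaussianReal_zero (v : ℝ≥0) : ∫ x, x ^ 2 ∂gaussianReal 0 v = v := by
  rw [← variance_of_integral_eq_zero aemeasurable_id' integral_id_gaussianReal,
    variance_fun_id_gaussianReal]

lemma IndepFun.hasLaw_sub_gaussianReal {Ω : Type*} {mΩ : MeasurableSpace Ω} {P : Measure Ω}
    {X Y : Ω → ℝ} {m₁ m₂ : ℝ} {v₁ v₂ : ℝ≥0} (hXY : IndepFun X Y P)
    (hX : HasLaw X (gaussianReal m₁ v₁) P) (hY : HasLaw Y (gaussianReal m₂ v₂) P) :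
    HasLaw (X - Y) (gaussianReal (m₁ - m₂) (v₁ + v₂)) P := by
  have h := (hXY.comp measurable_id measurable_neg).hasLaw_add hX (gaussianReal_neg hY)
  rw [gaussianReal_conv_gaussianReal] at h
  simpa [sub_eq_add_neg] using h

variable {μ : Measure ℝ} [IsProbabilityMeasure μ]

lemma memLp_two_const_add_sq (hμ : MemLp id 4 μ) (v : ℝ) : MemLp (fun x => (v + x) ^ 2) 2 μ := by
  rw [memLp_two_iff_integrable_sq (by fun_prop)]
  simpa [← pow_mul] using ((memLp_const v).add hμ).integrable_pow_four

lemma integral_const_add_sq (hμ : MemLp id 2 μ) (hμ0 : ∫ x, x ∂μ = 0) (v : ℝ) :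
    ∫ x, (v + x) ^ 2 ∂μ = v ^ 2 + ∫ x, x ^ 2 ∂μ := by
  have h1 : Integrable (fun x : ℝ => x) μ := hμ.integrable one_le_two
  have h2 : Integrable (fun x : ℝ => x ^ 2) μ := hμ.integrable_sq
  simp_rw [add_sq]
  rw [integral_add (f := fun x => v ^ 2 + 2 * v * x) ((integrable_const _).add (h1.const_mul _)) h2,
    integral_add (integrable_const _) (h1.const_mul _), integral_const_mul, hμ0]
  simp

lemma variance_const_add_sq_le (hμ : MemLp id 4 μ) (v : ℝ) :
    Var[fun x => (v + x) ^ 2; μ] ≤ 8 * v ^ 2 * ∫ x, x ^ 2 ∂μ + 2 * ∫ x, x ^ 4 ∂μ := by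
  have h2 : Integrable (fun x : ℝ => x ^ 2) μ := (hμ.mono_exponent (by norm_num)).integrable_sq
  have h4 : Integrable (fun x : ℝ => x ^ 4) μ := hμ.integrable_pow_four
  have hW : MemLp (fun x => (v + x) ^ 2 - v ^ 2) 2 μ :=
    (memLp_two_const_add_sq hμ v).sub (memLp_const _)
  calc Var[fun x => (v + x) ^ 2; μ] = Var[fun x => (v + x) ^ 2 - v ^ 2; μ] :=
        (variance_sub_const (by fun_prop) _).symm
    _ ≤ ∫ x, ((v + x) ^ 2 - v ^ 2) ^ 2 ∂μ := variance_le_expectation_sq (by fun_prop)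
    _ ≤ ∫ x, (8 * v ^ 2 * x ^ 2 + 2 * x ^ 4) ∂μ := by
        refine integral_mono hW.integrable_sq ((h2.const_mul _).add (h4.const_mul _)) fun x => ?_
        nlinarith [sq_nonneg (2 * v * x - x ^ 2)]
    _ = 8 * v ^ 2 * ∫ x, x ^ 2 ∂μ + 2 * ∫ x, x ^ 4 ∂μ := by
        rw [integral_add (h2.const_mul _) (h4.const_mul _), integral_const_mul, integral_const_mul]

variable {Ω ι : Type*} [Fintype ι] {mΩ : MeasurableSpace Ω} {P : Measure Ω}
  [IsProbabilityMeasure P]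

lemma meas_ge_abs_norm_add_sq_sub_le (hμ : MemLp id 4 μ) (hμ0 : ∫ x, x ∂μ = 0)
    {Z : Ω → EuclideanSpace ℝ ι} (hZ : ∀ k, HasLaw (fun ω => Z ω k) μ P)
    (hindep : Pairwise fun k l => IndepFun (fun ω => Z ω k) (fun ω => Z ω l) P)
    (v : EuclideanSpace ℝ ι) {t : ℝ} (ht : 0 < t) :
    P {ω | t ≤ |‖v + Z ω‖ ^ 2 - (‖v‖ ^ 2 + Fintype.card ι * ∫ x, x ^ 2 ∂μ)|} ≤
      ENNReal.ofReal ((8 * ‖v‖ ^ 2 * ∫ x, x ^ 2 ∂μ + 2 * Fintype.card ι * ∫ x, x ^ 4 ∂μ)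
        / t ^ 2) := by
  set m₂ := ∫ x, x ^ 2 ∂μ
  set f : ι → ℝ → ℝ := fun k x => (v k + x) ^ 2
  set W : ι → Ω → ℝ := fun k ω => f k (Z ω k)
  have hW_memLp (k : ι) : MemLp (W k) 2 P := by
    have h := memLp_two_const_add_sq hμ (v k)
    rw [← (hZ k).map_eq] at h
    exact h.comp_of_map (hZ k).aemeasurable
  have hW_integral (k : ι) : P[W k] = v k ^ 2 + m₂ := by
    rw [← integral_const_add_sq (hμ.mono_exponent (by norm_num)) hμ0]
    exact (hZ k).integral_comp (f := f k) (by fun_prop)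
  have hW_variance (k : ι) : Var[W k; P] = Var[f k; μ] := by
    rw [← (hZ k).map_eq, variance_map (by fun_prop) (hZ k).aemeasurable]
    rfl
  have hW_indep : Set.Pairwise (Finset.univ : Finset ι) fun k l => IndepFun (W k) (W l) P :=
    fun k _ l _ hkl => (hindep hkl).comp (φ := f k) (ψ := f l) (by fun_prop) (by fun_prop)
  have hnorm (ω : Ω) : ‖v + Z ω‖ ^ 2 = (∑ k, W k) ω := by
    simp [W, f, EuclideanSpace.real_norm_sq_eq]
  have hmean : P[∑ k, W k] = ‖v‖ ^ 2 + Fintype.card ι * m₂ := by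
    simp_rw [Finset.sum_apply, integral_finsetSum _ fun k _ => (hW_memLp k).integrable one_le_two,
      hW_integral, Finset.sum_add_distrib, EuclideanSpace.real_norm_sq_eq]
    simp
  have hvariance : Var[∑ k, W k; P] ≤
      8 * ‖v‖ ^ 2 * m₂ + 2 * Fintype.card ι * ∫ x, x ^ 4 ∂μ := by
    rw [IndepFun.variance_sum (fun k _ => hW_memLp k) hW_indep]
    calc ∑ k, Var[W k; P] ≤ ∑ k, (8 * v k ^ 2 * m₂ + 2 * ∫ x, x ^ 4 ∂μ) :=
          Finset.sum_le_sum fun k _ => (hW_variance k).trans_le (variance_const_add_sq_le hμ (v k))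
      _ = _ := by
          rw [Finset.sum_add_distrib, ← Finset.sum_mul, ← Finset.mul_sum,
            ← EuclideanSpace.real_norm_sq_eq]
          simp only [Finset.sum_const, Finset.card_univ, nsmul_eq_mul, add_right_inj]
          ring
  calc P {ω | t ≤ |‖v + Z ω‖ ^ 2 - (‖v‖ ^ 2 + Fintype.card ι * m₂)|}
      = P {ω | t ≤ |(∑ k, W k) ω - P[∑ k, W k]|} := by simp_rw [hnorm, hmean]
    _ ≤ ENNReal.ofReal (Var[∑ k, W k; P] / t ^ 2) :=
        meas_ge_le_variance_div_sq (memLp_finsetSum' _ fun k _ => hW_memLp k) ht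
    _ ≤ _ := by gcongr

lemma tendsto_measure_lt_abs_norm_add_div_sqrt_sub (hμ : MemLp id 4 μ) (hμ0 : ∫ x, x ∂μ = 0)
    {Z : (d : ℕ) → Ω → EuclideanSpace ℝ (Fin d)} (hZ : ∀ d k, HasLaw (fun ω => Z d ω k) μ P)
    (hindep : ∀ d, Pairwise fun k l => IndepFun (fun ω => Z d ω k) (fun ω => Z d ω l) P)
    {v : (d : ℕ) → EuclideanSpace ℝ (Fin d)} {R : ℝ} (hv : ∀ᶠ d in atTop, ‖v d‖ ≤ R)
    {c : ℝ} (hc : 0 < c) :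
    Tendsto (fun d : ℕ => P {ω | c < |‖v d + Z d ω‖ / √d - √(∫ x, x ^ 2 ∂μ)|}) atTop (𝓝 0) := by
  set m₂ := ∫ x, x ^ 2 ∂μ
  set m₄ := ∫ x, x ^ 4 ∂μ
  have hm₂ : 0 ≤ m₂ := integral_nonneg fun x => by positivity
  have hm₄ : 0 ≤ m₄ := integral_nonneg fun x => by positivity
  set K := (8 * R ^ 2 * m₂ + 2 * m₄) / (c ^ 2 / 2) ^ 2 with hK
  have hbound : Tendsto (fun d : ℕ => ENNReal.ofReal (K / d)) atTop (𝓝 0) := by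
    simpa using ENNReal.tendsto_ofReal (tendsto_const_div_atTop_nhds_zero_nat K)
  have hlarge : ∀ᶠ d : ℕ in atTop, R ^ 2 ≤ c ^ 2 * d / 2 := by
    simpa [mul_div_right_comm] using
      (tendsto_natCast_atTop_atTop.const_mul_atTop (by positivity : 0 < c ^ 2 / 2)).eventually_ge_atTop
        (R ^ 2)
  refine tendsto_of_tendsto_of_tendsto_of_le_of_le' tendsto_const_nhds hbound
    (.of_forall fun _ => zero_le) ?_
  filter_upwards [hv, hlarge, eventually_ge_atTop 1] with d hvd hRd hd_one
  have hd1 : (1 : ℝ) ≤ d := by exact_mod_cast hd_one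
  have hd : (0 : ℝ) < d := by positivity
  calc P {ω | c < |‖v d + Z d ω‖ / √d - √m₂|}
      ≤ P {ω | c ^ 2 * d / 2 ≤ |‖v d + Z d ω‖ ^ 2 - (‖v d‖ ^ 2 + Fintype.card (Fin d) * m₂)|} := by
        refine measure_mono fun ω hω => ?_
        rw [Set.mem_ofPred_eq, Fintype.card_fin]
        exact sq_mul_div_two_le_abs_sq_sub (r := ‖v d‖ ^ 2) (norm_nonneg _) hc.le hd hm₂
          (by rw [abs_sq]; linarith [pow_le_pow_left₀ (norm_nonneg _) hvd 2]) hω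
    _ ≤ ENNReal.ofReal ((8 * ‖v d‖ ^ 2 * m₂ + 2 * Fintype.card (Fin d) * m₄)
          / (c ^ 2 * d / 2) ^ 2) :=
        meas_ge_abs_norm_add_sq_sub_le hμ hμ0 (hZ d) (hindep d) (v d) (by positivity)
    _ ≤ ENNReal.ofReal (K / d) := by
        refine ENNReal.ofReal_le_ofReal ?_
        have hnum : 8 * ‖v d‖ ^ 2 * m₂ + 2 * d * m₄ ≤ (8 * R ^ 2 * m₂ + 2 * m₄) * d := by
          have hvR : ‖v d‖ ^ 2 ≤ R ^ 2 := pow_le_pow_left₀ (norm_nonneg _) hvd 2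
          nlinarith [mul_le_mul_of_nonneg_right hvR hm₂,
            mul_le_mul_of_nonneg_left hd1 (by positivity : 0 ≤ R ^ 2 * m₂)]
        simp only [Fintype.card_fin]
        calc (8 * ‖v d‖ ^ 2 * m₂ + 2 * d * m₄) / (c ^ 2 * d / 2) ^ 2
            ≤ (8 * R ^ 2 * m₂ + 2 * m₄) * d / (c ^ 2 * d / 2) ^ 2 := by gcongr
          _ = K / d := by rw [hK]; field_simp

end ProbabilityTheory

theorem noisy_distance_convergence_in_probability_general
    (Ω : Type*) [MeasureSpace Ω] [IsProbabilityMeasure (ℙ : Measure Ω)]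
    (n d' : ℕ) (x : Fin n → EuclideanSpace ℝ (Fin d'))
    (σ : ℝ) (hσ : 0 < σ)
    (ι : (d : ℕ) → EuclideanSpace ℝ (Fin d') → EuclideanSpace ℝ (Fin d))
    (hι : ∀ d, d' ≤ d → Isometry (ι d))
    (ε : (d : ℕ) → Fin n → Ω → EuclideanSpace ℝ (Fin d))
    (hdist : ∀ d i (k : Fin d),
      Measure.map (fun ω => ε d i ω k) ℙ = gaussianReal 0 ⟨σ ^ 2, sq_nonneg σ⟩)
    (hindep : ∀ d : ℕ, iIndepFun
      (fun (p : Fin n × Fin d) ω => ε d p.1 ω p.2) ℙ)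
    (i j : Fin n) (hij : i ≠ j) :
    ∀ c : ℝ, 0 < c →
      Tendsto
        (fun d : ℕ => ℙ {ω : Ω |
          c < |‖ι d (x i) + ε d i ω - (ι d (x j) + ε d j ω)‖ / Real.sqrt d
                - Real.sqrt 2 * σ|})
        atTop (nhds 0) := by
  intro c hc
  set V : ℝ≥0 := ⟨σ ^ 2, sq_nonneg σ⟩
  have hε (d : ℕ) (i : Fin n) (k : Fin d) : HasLaw (fun ω => ε d i ω k) (gaussianReal 0 V) ℙ :=
    ⟨.of_map_ne_zero (by rw [hdist]; exact IsProbabilityMeasure.ne_zero _), hdist d i k⟩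
  set Z : (d : ℕ) → Ω → EuclideanSpace ℝ (Fin d) := fun d ω => ε d i ω - ε d j ω
  have hZ (d : ℕ) (k : Fin d) : HasLaw (fun ω => Z d ω k) (gaussianReal 0 (V + V)) ℙ := by
    have h := ((hindep d).indepFun (by simp [hij] : (i, k) ≠ (j, k))).hasLaw_sub_gaussianReal
      (hε d i k) (hε d j k)
    rwa [sub_zero] at h
  have hZ_indep (d : ℕ) :
      Pairwise fun k l => IndepFun (fun ω => Z d ω k) (fun ω => Z d ω l) ℙ := fun k l hkl =>
    ((hindep d).indepFun_prodMk_prodMk₀ (fun p => (hε d p.1 p.2).aemeasurable) (i, k) (j, k)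
      (i, l) (j, l) (by simp [hkl]) (by simp [hij]) (by simp [hij.symm]) (by simp [hkl])).comp
      (φ := fun p : ℝ × ℝ => p.1 - p.2) (ψ := fun p : ℝ × ℝ => p.1 - p.2) (by fun_prop)
      (by fun_prop)
  have hv : ∀ᶠ d in atTop, ‖ι d (x i) - ι d (x j)‖ ≤ dist (x i) (x j) := by
    filter_upwards [eventually_ge_atTop d'] with d hd
    rw [← dist_eq_norm, (hι d hd).dist_eq]
  have hm₂ : √(∫ t, t ^ 2 ∂gaussianReal 0 (V + V)) = √2 * σ := by
    rw [integral_sq_gaussianReal_zero, NNReal.coe_add]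
    change √(σ ^ 2 + σ ^ 2) = √2 * σ
    rw [← two_mul, Real.sqrt_mul zero_le_two, Real.sqrt_sq hσ.le]
  have h := tendsto_measure_lt_abs_norm_add_div_sqrt_sub (memLp_id_gaussianReal' 4 (by simp))
    integral_id_gaussianReal hZ hZ_indep hv hc
  simpa only [add_sub_add_comm, hm₂] using h

/-- Let `x₁, …, x_n ∈ ℝ^{d'}` be pairwise distinct, `ι_d` isometric embeddings
for `d ≥ d'`, and `ε_{1,d}, …, ε_{n,d}` jointly independent `N(0, σ²I_d)` random vectors. With
`Δ_{i,j,d} = ‖ι_d(x_i) + ε_{i,d} − (ι_d(x_j) + ε_{j,d})‖`, for each `i ≠ j` the sequence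
`Δ_{i,j,d}/√d` converges to `√2·σ` in probability. -/
theorem noisy_distance_convergence_in_probability
    (Ω : Type*) [MeasureSpace Ω] [IsProbabilityMeasure (ℙ : Measure Ω)]
    (n d' : ℕ) (x : Fin n → EuclideanSpace ℝ (Fin d'))
    (hx : Function.Injective x)
    (σ : ℝ) (hσ : 0 < σ)
    (ι : (d : ℕ) → EuclideanSpace ℝ (Fin d') → EuclideanSpace ℝ (Fin d))
    (hι : ∀ d, d' ≤ d → Isometry (ι d))
    (ε : (d : ℕ) → Fin n → Ω → EuclideanSpace ℝ (Fin d))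
    (hmeas : ∀ d i (k : Fin d), Measurable (fun ω => ε d i ω k))
    (hdist : ∀ d i (k : Fin d),
      Measure.map (fun ω => ε d i ω k) ℙ = gaussianReal 0 ⟨σ ^ 2, sq_nonneg σ⟩)
    (hindep : ∀ d : ℕ, iIndepFun
      (fun (p : Fin n × Fin d) ω => ε d p.1 ω p.2) ℙ)
    (i j : Fin n) (hij : i ≠ j) :
    ∀ c : ℝ, 0 < c →
      Tendsto
        (fun d : ℕ => ℙ {ω : Ω |
          c < |‖ι d (x i) + ε d i ω - (ι d (x j) + ε d j ω)‖ / Real.sqrt d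
                - Real.sqrt 2 * σ|})
        atTop (nhds 0) :=
  noisy_distance_convergence_in_probability_general Ω n d' x σ hσ ι hι ε hdist hindep i j hij
end

section
/- Let x_1, …, x_n be n pairwise distinct points in ℝ^{d'} and let, for each d ≥ d', ι_d : ℝ^{d'} → ℝ^d be an isometric embedding. For each d, let ε_{1,d}, …, ε_{n,d} be jointly independent random vectors each distributed as N(0, σ²I_d) with σ > 0, and set Δ_{i,j,d} = ‖ι_d(x_i) + ε_{i,d} − (ι_d(x_j) + ε_{j,d})‖. Then for each pair i ≠ j, the ratio ‖ε_{i,d} − ε_{j,d}‖/Δ_{i,j,d} converges to 1 in probability as d → ∞ (the ratio is well defined almost surely). -/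
/-!
Write `u = ε_{i,d} − ε_{j,d}` and `v = ι_d(x_i) − ι_d(x_j)`, so that `Δ_{i,j,d} = ‖u + v‖`, where
`‖v‖ = ‖x_i − x_j‖` does not depend on `d`. By the triangle inequality the ratio `‖u‖ / ‖u + v‖` is
within `c` of `1` as soon as `‖u‖` exceeds a constant depending only on `‖v‖` and `c`. The
coordinates of `u` are independent `N(0, 2σ²)` variables, so the number of them of modulus at least
`1` is a binomial count with mean proportional to `d`; by Chebyshev it exceeds any fixed bound with
probability tending to `1`, and it is a lower bound for `‖u‖²`.
-/

open MeasureTheory ProbabilityTheory Filter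

open scoped NNReal Topology

lemma abs_norm_div_norm_add_sub_one_le {E : Type*} [SeminormedAddCommGroup E] {u v : E}
    {c : ℝ} (hc : 0 < c) (hu : ‖v‖ + ‖v‖ / c < ‖u‖) : |‖u‖ / ‖u + v‖ - 1| ≤ c := by
  have hΔ : ‖v‖ / c < ‖u + v‖ := by
    have := norm_sub_norm_le u (-v)
    rw [sub_neg_eq_add, norm_neg] at this
    linarith
  have hΔpos : 0 < ‖u + v‖ := (div_nonneg (norm_nonneg v) hc.le).trans_lt hΔ
  have hgap : |‖u‖ - ‖u + v‖| ≤ ‖v‖ := by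
    simpa using abs_norm_sub_norm_le u (u + v)
  rw [div_sub_one hΔpos.ne', abs_div, abs_of_pos hΔpos, div_le_iff₀ hΔpos]
  linarith [(div_lt_iff₀' hc).mp hΔ]

lemma sq_mul_sum_indicator_le_norm_sq {ι : Type*} [Fintype ι] {a : ℝ} (ha : 0 ≤ a)
    (z : EuclideanSpace ℝ ι) :
    a ^ 2 * ∑ k, {t : ℝ | a ≤ |t|}.indicator 1 (z k) ≤ ‖z‖ ^ 2 := by
  rw [EuclideanSpace.norm_sq_eq, Finset.mul_sum]
  refine Finset.sum_le_sum fun k _ => ?_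
  by_cases hk : a ≤ |z k|
  · simpa [hk, Real.norm_eq_abs] using pow_le_pow_left₀ ha hk 2
  · simpa [hk] using sq_nonneg (z k)

lemma measureReal_gaussianReal_pos {m : ℝ} {v : ℝ≥0} (hv : v ≠ 0) {s : Set ℝ}
    (hs : volume s ≠ 0) : 0 < (gaussianReal m v).real s :=
  ENNReal.toReal_pos (fun h => hs (gaussianReal_absolutelyContinuous' m hv h)) (measure_ne_top _ _)

lemma gaussianReal_sub_gaussianReal_of_indepFun {Ω : Type*} [MeasurableSpace Ω] {P : Measure Ω}
    {m₁ m₂ : ℝ} {v₁ v₂ : ℝ≥0} {X Y : Ω → ℝ} (hXY : IndepFun X Y P)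
    (hX : P.map X = gaussianReal m₁ v₁) (hY : P.map Y = gaussianReal m₂ v₂) :
    P.map (X - Y) = gaussianReal (m₁ - m₂) (v₁ + v₂) := by
  have hYm : AEMeasurable Y P := AEMeasurable.of_map_ne_zero (by simp [hY, NeZero.ne])
  have hnegY : P.map (-Y) = gaussianReal (-m₂) v₂ := by
    rw [← gaussianReal_map_neg, ← hY, AEMeasurable.map_map_of_aemeasurable (by fun_prop) hYm]
    rfl
  rw [sub_eq_add_neg, sub_eq_add_neg]
  exact gaussianReal_add_gaussianReal_of_indepFun (hXY.comp measurable_id measurable_neg) hX hnegY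

section

variable {Ω : Type*} [MeasurableSpace Ω] {P : Measure Ω} [IsProbabilityMeasure P]

theorem tendsto_measure_sum_le_of_pairwise_indepFun {X : (d : ℕ) → Fin d → Ω → ℝ} {p V : ℝ}
    (hp : 0 < p) (hX : ∀ d k, MemLp (X d k) 2 P) (hvar : ∀ d k, variance (X d k) P ≤ V)
    (hmean : ∀ d k, p ≤ P[X d k])
    (hindep : ∀ d, Pairwise fun k l => IndepFun (X d k) (X d l) P) (R : ℝ) :
    Tendsto (fun d => P {ω | ∑ k, X d k ω ≤ R}) atTop (𝓝 0) := by
  have hbound : ∀ᶠ d : ℕ in atTop,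
      P {ω | ∑ k, X d k ω ≤ R} ≤ ENNReal.ofReal (4 * V / p ^ 2 / d) := by
    filter_upwards [eventually_gt_atTop 0,
      tendsto_natCast_atTop_atTop.eventually_ge_atTop (2 * R / p)] with d hd hdR
    have hd0 : (0 : ℝ) < d := by exact_mod_cast hd
    have hS : MemLp (∑ k, X d k) 2 P := memLp_finsetSum' _ fun k _ => hX d k
    have hES : d * p ≤ P[∑ k, X d k] := by
      simp only [Finset.sum_apply]
      rw [integral_finsetSum _ fun k _ => (hX d k).integrable one_le_two]
      simpa using Finset.sum_le_sum fun k (_ : k ∈ Finset.univ) => hmean d k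
    have hVS : variance (∑ k, X d k) P ≤ d * V := by
      rw [IndepFun.variance_sum (fun k _ => hX d k) fun k _ l _ hkl => hindep d hkl]
      simpa using Finset.sum_le_sum fun k (_ : k ∈ Finset.univ) => hvar d k
    have hRp : R ≤ d * p / 2 := by
      rw [div_le_iff₀ hp] at hdR
      linarith
    calc P {ω | ∑ k, X d k ω ≤ R}
        ≤ P {ω | d * p / 2 ≤ |(∑ k, X d k) ω - P[∑ k, X d k]|} := by
          refine measure_mono fun ω (hω : ∑ k, X d k ω ≤ R) => ?_
          show d * p / 2 ≤ |(∑ k, X d k) ω - P[∑ k, X d k]|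
          rw [Finset.sum_apply, abs_sub_comm]
          exact le_abs.mpr (Or.inl (by linarith))
      _ ≤ ENNReal.ofReal (variance (∑ k, X d k) P / (d * p / 2) ^ 2) :=
          meas_ge_le_variance_div_sq hS (by positivity)
      _ ≤ ENNReal.ofReal (4 * V / p ^ 2 / d) := by
          refine ENNReal.ofReal_le_ofReal ?_
          calc variance (∑ k, X d k) P / (d * p / 2) ^ 2 ≤ d * V / (d * p / 2) ^ 2 := by
                gcongr
            _ = 4 * V / p ^ 2 / d := by field_simp; ring
  have hlim : Tendsto (fun d : ℕ => ENNReal.ofReal (4 * V / p ^ 2 / d)) atTop (𝓝 0) := by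
    simpa using ENNReal.tendsto_ofReal (tendsto_const_div_atTop_nhds_zero_nat (4 * V / p ^ 2))
  exact tendsto_of_tendsto_of_tendsto_of_le_of_le' tendsto_const_nhds hlim
    (Eventually.of_forall fun _ => zero_le) hbound

theorem tendsto_measure_norm_le_of_pairwise_indepFun {Z : (d : ℕ) → Ω → EuclideanSpace ℝ (Fin d)}
    {μ : Measure ℝ} {a : ℝ} (hZ : ∀ d k, Measurable fun ω => Z d ω k)
    (hlaw : ∀ d k, P.map (fun ω => Z d ω k) = μ)
    (hindep : ∀ d, Pairwise fun k l => IndepFun (fun ω => Z d ω k) (fun ω => Z d ω l) P)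
    (ha : 0 < a) (hμ : 0 < μ.real {t | a ≤ |t|}) (R : ℝ) :
    Tendsto (fun d => P {ω | ‖Z d ω‖ ≤ R}) atTop (𝓝 0) := by
  set s : Set ℝ := {t | a ≤ |t|}
  have hs : MeasurableSet s := measurableSet_le measurable_const measurable_abs
  have hind : Measurable (s.indicator (1 : ℝ → ℝ)) := measurable_const.indicator hs
  have hbdd : ∀ d k, ∀ ω, s.indicator 1 (Z d ω k) ∈ Set.Icc (0 : ℝ) 1 := fun d k ω =>
    ⟨Set.indicator_nonneg (fun _ _ => zero_le_one) _,
      Set.indicator_le_self' (fun _ _ => zero_le_one) _⟩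
  have hcount := tendsto_measure_sum_le_of_pairwise_indepFun (P := P)
    (X := fun d k ω => s.indicator 1 (Z d ω k)) (V := ((1 - 0) / 2) ^ 2) hμ
    (fun d k => memLp_of_bounded (ae_of_all _ (hbdd d k))
      (hind.comp (hZ d k)).aestronglyMeasurable 2)
    (fun d k => variance_le_sq_of_bounded (ae_of_all _ (hbdd d k))
      (hind.comp (hZ d k)).aemeasurable)
    (fun d k => by
      rw [← integral_map (hZ d k).aemeasurable hind.aestronglyMeasurable, hlaw,
        integral_indicator_one hs])
    (fun d k l hkl => (hindep d hkl).comp hind hind) (R ^ 2 / a ^ 2)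
  refine tendsto_of_tendsto_of_tendsto_of_le_of_le tendsto_const_nhds hcount (fun _ => zero_le)
    fun d => measure_mono fun ω (hω : ‖Z d ω‖ ≤ R) => ?_
  show ∑ k, s.indicator 1 (Z d ω k) ≤ R ^ 2 / a ^ 2
  rw [le_div_iff₀' (by positivity)]
  calc a ^ 2 * ∑ k, s.indicator 1 (Z d ω k) ≤ ‖Z d ω‖ ^ 2 := sq_mul_sum_indicator_le_norm_sq ha.le _
    _ ≤ R ^ 2 := pow_le_pow_left₀ (norm_nonneg _) hω 2

theorem tendsto_measure_norm_sub_le_of_iIndepFun_gaussianReal {ι : Type*}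
    {ε : (d : ℕ) → ι → Ω → EuclideanSpace ℝ (Fin d)} {m : ℝ} {v : ℝ≥0} (hv : v ≠ 0)
    (hmeas : ∀ d i (k : Fin d), Measurable fun ω => ε d i ω k)
    (hdist : ∀ d i (k : Fin d), P.map (fun ω => ε d i ω k) = gaussianReal m v)
    (hindep : ∀ d, iIndepFun (fun (p : ι × Fin d) ω => ε d p.1 ω p.2) P)
    {i j : ι} (hij : i ≠ j) (R : ℝ) :
    Tendsto (fun d => P {ω | ‖ε d i ω - ε d j ω‖ ≤ R}) atTop (𝓝 0) := by
  have hcoord : ∀ d, Pairwise fun k l : Fin d =>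
      IndepFun (fun ω => ε d i ω k - ε d j ω k) (fun ω => ε d i ω l - ε d j ω l) P :=
    fun d k l hkl => ((hindep d).indepFun_prodMk_prodMk (fun q => hmeas d q.1 q.2)
      (i, k) (j, k) (i, l) (j, l) (by simp [hkl]) (by simp [hkl]) (by simp [hkl])
      (by simp [hkl])).comp (measurable_fst.sub measurable_snd) (measurable_fst.sub measurable_snd)
  have hlaw : ∀ d (k : Fin d),
      P.map (fun ω => (ε d i ω - ε d j ω) k) = gaussianReal (m - m) (v + v) := fun d k =>
    gaussianReal_sub_gaussianReal_of_indepFun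
      ((hindep d).indepFun (show ((i, k) : ι × Fin d) ≠ (j, k) by simp [hij]))
      (hdist d i k) (hdist d j k)
  have hvol : volume {t : ℝ | 1 ≤ |t|} ≠ 0 := fun h => by
    simpa using measure_mono_null (s := Set.Ici (1 : ℝ))
      (fun t (ht : 1 ≤ t) => ht.trans (le_abs_self t)) h
  exact tendsto_measure_norm_le_of_pairwise_indepFun (Z := fun d ω => ε d i ω - ε d j ω)
    (fun d k => (hmeas d i k).sub (hmeas d j k)) hlaw hcoord one_pos
    (measureReal_gaussianReal_pos (add_ne_zero.mpr (Or.inl hv)) hvol) R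

end

theorem noise_dominates_distance_in_probability_general
    (Ω : Type*) [MeasureSpace Ω] [IsProbabilityMeasure (ℙ : Measure Ω)]
    (n d' : ℕ) (x : Fin n → EuclideanSpace ℝ (Fin d'))
    (σ : ℝ) (hσ : 0 < σ)
    (ι : (d : ℕ) → EuclideanSpace ℝ (Fin d') → EuclideanSpace ℝ (Fin d))
    (hι : ∀ d, d' ≤ d → Isometry (ι d))
    (ε : (d : ℕ) → Fin n → Ω → EuclideanSpace ℝ (Fin d))
    (hmeas : ∀ d i (k : Fin d), Measurable (fun ω => ε d i ω k))
    (hdist : ∀ d i (k : Fin d),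
      Measure.map (fun ω => ε d i ω k) ℙ = gaussianReal 0 ⟨σ ^ 2, sq_nonneg σ⟩)
    (hindep : ∀ d : ℕ, iIndepFun
      (fun (p : Fin n × Fin d) ω => ε d p.1 ω p.2) ℙ)
    (i j : Fin n) (hij : i ≠ j) :
    ∀ c : ℝ, 0 < c →
      Tendsto
        (fun d : ℕ => ℙ {ω : Ω |
          c < |‖ε d i ω - ε d j ω‖ /
                ‖ι d (x i) + ε d i ω - (ι d (x j) + ε d j ω)‖ - 1|})
        atTop (nhds 0) := by
  intro c hc
  have hv : (⟨σ ^ 2, sq_nonneg σ⟩ : ℝ≥0) ≠ 0 := fun h => (pow_pos hσ 2).ne' (congrArg Subtype.val h)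
  have hnoise := tendsto_measure_norm_sub_le_of_iIndepFun_gaussianReal hv hmeas hdist hindep hij
    (dist (x i) (x j) + dist (x i) (x j) / c)
  refine tendsto_of_tendsto_of_tendsto_of_le_of_le' tendsto_const_nhds hnoise
    (Eventually.of_forall fun _ => zero_le) ?_
  filter_upwards [eventually_ge_atTop d'] with d hd
  refine measure_mono fun ω hω => ?_
  have hsep : ‖ι d (x i) - ι d (x j)‖ = dist (x i) (x j) := by
    rw [← dist_eq_norm, (hι d hd).dist_eq]
  have hΔ : ι d (x i) + ε d i ω - (ι d (x j) + ε d j ω) =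
      (ε d i ω - ε d j ω) + (ι d (x i) - ι d (x j)) := by abel
  change ‖ε d i ω - ε d j ω‖ ≤ _
  by_contra! h
  rw [← hsep] at h
  have := abs_norm_div_norm_add_sub_one_le hc h
  rw [← hΔ] at this
  exact not_lt.mpr this hω

/-- Let `x₁, …, x_n ∈ ℝ^{d'}` be pairwise distinct, `ι_d` isometric embeddings
for `d ≥ d'`, and `ε_{1,d}, …, ε_{n,d}` jointly independent `N(0, σ²I_d)` random vectors. With
`Δ_{i,j,d} = ‖ι_d(x_i) + ε_{i,d} − (ι_d(x_j) + ε_{j,d})‖`, for each `i ≠ j` the ratio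
`‖ε_{i,d} − ε_{j,d}‖/Δ_{i,j,d}` converges to `1` in probability. -/
theorem noise_dominates_distance_in_probability
    (Ω : Type*) [MeasureSpace Ω] [IsProbabilityMeasure (ℙ : Measure Ω)]
    (n d' : ℕ) (x : Fin n → EuclideanSpace ℝ (Fin d'))
    (hx : Function.Injective x)
    (σ : ℝ) (hσ : 0 < σ)
    (ι : (d : ℕ) → EuclideanSpace ℝ (Fin d') → EuclideanSpace ℝ (Fin d))
    (hι : ∀ d, d' ≤ d → Isometry (ι d))
    (ε : (d : ℕ) → Fin n → Ω → EuclideanSpace ℝ (Fin d))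
    (hmeas : ∀ d i (k : Fin d), Measurable (fun ω => ε d i ω k))
    (hdist : ∀ d i (k : Fin d),
      Measure.map (fun ω => ε d i ω k) ℙ = gaussianReal 0 ⟨σ ^ 2, sq_nonneg σ⟩)
    (hindep : ∀ d : ℕ, iIndepFun
      (fun (p : Fin n × Fin d) ω => ε d p.1 ω p.2) ℙ)
    (i j : Fin n) (hij : i ≠ j) :
    ∀ c : ℝ, 0 < c →
      Tendsto
        (fun d : ℕ => ℙ {ω : Ω |
          c < |‖ε d i ω - ε d j ω‖ /
                ‖ι d (x i) + ε d i ω - (ι d (x j) + ε d j ω)‖ - 1|})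
        atTop (nhds 0) :=
  noise_dominates_distance_in_probability_general Ω n d' x σ hσ ι hι ε hmeas hdist hindep i j hij
end

section
/- Fix a positive integer m and let D be a persistence diagram with at least m points (counted with multiplicity). Then the hole detection score s_m is continuous at D with respect to the bottleneck distance: for every ε > 0 there exists δ > 0 such that every persistence diagram D' with d_B(D, D') < δ satisfies |s_m(D') − s_m(D)| < ε. -/
/-!
The `k`-th largest persistence is `2`-Lipschitz for the bottleneck distance. Under a partial
matching of cost `c`, matched points change persistence by at most `2c` and unmatched points have
persistence at most `2c`, so `k` points of persistence `≥ r > 2c` in one diagram give `k` points of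
persistence `≥ r - 2c` in the other. Since `p_m(D) > 0` when `D` has at least `m` points, near `D`
the score `s_m` is the function `(p, q) ↦ (p - q) / p` of `(p_m, p_{m+1})`, continuous where `p ≠ 0`.
-/

/-- A persistence diagram: a finite multiset of points `(b, e) ∈ ℝ²` with `b < e`. -/
def IsPersistenceDiagram (D : Multiset (ℝ × ℝ)) : Prop :=
  ∀ x ∈ D, x.1 < x.2

/-- Cost of a partial matching `M` (a multiset of matched pairs whose first and second
projections are sub-multisets of `D` and `D'` respectively): the maximum of the `ℓ∞` distances
over matched pairs and of half the persistences over unmatched points (`0` for the empty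
matching of two empty diagrams). -/
noncomputable def matchingCost (D D' : Multiset (ℝ × ℝ))
    (M : Multiset ((ℝ × ℝ) × (ℝ × ℝ))) : ℝ :=
  ((M.map fun q : (ℝ × ℝ) × (ℝ × ℝ) => max |q.1.1 - q.2.1| |q.1.2 - q.2.2|) +
    ((D - M.map Prod.fst) + (D' - M.map Prod.snd)).map
      fun x : ℝ × ℝ => (x.2 - x.1) / 2).fold max 0

/-- The bottleneck distance between persistence diagrams: the infimum of the costs over all
partial matchings. -/
noncomputable def bottleneckDist (D D' : Multiset (ℝ × ℝ)) : ℝ :=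
  sInf {c : ℝ | ∃ M : Multiset ((ℝ × ℝ) × (ℝ × ℝ)),
    M.map Prod.fst ≤ D ∧ M.map Prod.snd ≤ D' ∧ c = matchingCost D D' M}

/-- `persistenceRank m D`: the `m`-th largest persistence among the points of `D` counted with
multiplicity, defined to be `0` if `D` has fewer than `m` points. -/
noncomputable def persistenceRank (m : ℕ) (D : Multiset (ℝ × ℝ)) : ℝ :=
  let l := (D.map fun x => x.2 - x.1).sort (· ≤ ·)
  if m ≤ l.length then l.getD (l.length - m) 0 else 0

/-- The hole detection score `s_m`. -/
noncomputable def holeDetectionScore (m : ℕ) (D : Multiset (ℝ × ℝ)) : ℝ :=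
  if 0 < persistenceRank m D then
    (persistenceRank m D - persistenceRank (m + 1) D) / persistenceRank m D
  else 0

namespace Multiset

variable {α : Type*}

theorem le_fold_max_of_mem [LinearOrder α] {s : Multiset α} {a : α} (b : α) (h : a ∈ s) :
    a ≤ s.fold max b := by
  induction s using Multiset.induction_on with
  | empty => simp at h
  | cons c s ih =>
    rw [fold_cons_left]
    rcases mem_cons.mp h with rfl | h
    · exact le_max_left _ _
    · exact (ih h).trans (le_max_right _ _)

theorem le_fold_max_init [LinearOrder α] (s : Multiset α) (b : α) : b ≤ s.fold max b := by
  induction s using Multiset.induction_on with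
  | empty => simp
  | cons c s ih => exact ih.trans (by rw [fold_cons_left]; exact le_max_right _ _)

theorem countP_mono_left {p q : α → Prop} [DecidablePred p] [DecidablePred q] {s : Multiset α}
    (h : ∀ x ∈ s, p x → q x) : s.countP p ≤ s.countP q := by
  induction s using Quotient.inductionOn
  simpa using List.countP_mono_left (by simpa using h)

end Multiset

theorem List.le_getElem_length_sub_iff {α : Type*} [LinearOrder α] {l : List α}
    (hl : l.Pairwise (· ≤ ·)) {k : ℕ} (hk : 1 ≤ k) (hkl : k ≤ l.length) (r : α) :
    r ≤ l[l.length - k] ↔ k ≤ l.countP (fun a => r ≤ a) := by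
  set i := l.length - k
  constructor
  · intro hr
    have hsuffix : (l.drop i).countP (fun a => r ≤ a) = k := by
      rw [List.countP_eq_length.mpr, List.length_drop]
      · omega
      intro a ha
      obtain ⟨j, hj, rfl⟩ := List.mem_iff_getElem.mp ha
      rw [List.getElem_drop]
      exact decide_eq_true (hr.trans (hl.rel_get_of_le (a := ⟨i, by omega⟩)
        (b := ⟨i + j, by simp at hj; omega⟩) (by simp)))
    exact hsuffix ▸ (List.drop_sublist i l).countP_le
  · intro hcount
    by_contra! hlt
    have hprefix : (l.take (i + 1)).countP (fun a => r ≤ a) = 0 := by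
      rw [List.countP_eq_zero]
      intro a ha
      obtain ⟨j, hj, rfl⟩ := List.mem_iff_getElem.mp ha
      simp only [List.length_take] at hj
      rw [List.getElem_take]
      simpa using (hl.rel_get_of_le (a := ⟨j, by omega⟩)
        (b := ⟨i, by omega⟩) (by simp; omega)).trans_lt hlt
    have hsuffix := List.countP_le_length (p := fun a => r ≤ a) (l := l.drop (i + 1))
    rw [List.length_drop] at hsuffix
    rw [← List.take_append_drop (i + 1) l, List.countP_append, hprefix] at hcount
    omega

section PersistenceRank

variable {k : ℕ} {D : Multiset (ℝ × ℝ)}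

theorem persistenceRank_mem (hk : 1 ≤ k) (hkD : k ≤ Multiset.card D) :
    persistenceRank k D ∈ D.map fun x => x.2 - x.1 := by
  rw [persistenceRank, if_pos (by simpa using hkD), List.getD_eq_getElem _ _ (by simp; omega),
    ← Multiset.mem_sort (· ≤ ·)]
  exact List.getElem_mem _

theorem persistenceRank_pos (hD : IsPersistenceDiagram D) (hk : 1 ≤ k)
    (hkD : k ≤ Multiset.card D) : 0 < persistenceRank k D := by
  obtain ⟨x, hx, hrank⟩ := Multiset.mem_map.mp (persistenceRank_mem hk hkD)
  linarith [hD x hx]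

theorem persistenceRank_nonneg (hD : IsPersistenceDiagram D) (hk : 1 ≤ k) :
    0 ≤ persistenceRank k D := by
  by_cases hkD : k ≤ Multiset.card D
  · exact (persistenceRank_pos hD hk hkD).le
  · simp [persistenceRank, hkD]

theorem le_persistenceRank_iff (hk : 1 ≤ k) {r : ℝ} (hr : 0 < r) :
    r ≤ persistenceRank k D ↔ k ≤ D.countP fun x => r ≤ x.2 - x.1 := by
  have hcount : D.countP (fun x => r ≤ x.2 - x.1) =
      ((D.map fun x => x.2 - x.1).sort (· ≤ ·)).countP (fun a => r ≤ a) := by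
    rw [← Multiset.coe_countP, Multiset.sort_eq, Multiset.countP_map, Multiset.countP_eq_card_filter]
  rw [hcount, persistenceRank]
  split_ifs with hkD
  · rw [List.getD_eq_getElem _ _ (by omega)]
    exact List.le_getElem_length_sub_iff (Multiset.pairwise_sort _ _) hk hkD r
  · simp only [not_le] at hkD
    exact iff_of_false hr.not_ge (List.countP_le_length.trans_lt hkD).not_ge

end PersistenceRank

section Matching

variable {k : ℕ} {D D' : Multiset (ℝ × ℝ)} {M : Multiset ((ℝ × ℝ) × (ℝ × ℝ))}

theorem matchingCost_nonneg : 0 ≤ matchingCost D D' M :=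
  Multiset.le_fold_max_init _ _

theorem abs_persistence_sub_le_matchingCost {q : (ℝ × ℝ) × (ℝ × ℝ)} (hq : q ∈ M) :
    |(q.2.2 - q.2.1) - (q.1.2 - q.1.1)| ≤ 2 * matchingCost D D' M := by
  have hq : max |q.1.1 - q.2.1| |q.1.2 - q.2.2| ≤ matchingCost D D' M :=
    Multiset.le_fold_max_of_mem _ (Multiset.mem_add.mpr (.inl (Multiset.mem_map_of_mem _ hq)))
  obtain ⟨hb, he⟩ := max_le_iff.mp hq
  rw [abs_le] at hb he ⊢
  constructor <;> linarith [hb.1, hb.2, he.1, he.2]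

theorem persistence_le_matchingCost_of_unmatched {x : ℝ × ℝ} (hx : x ∈ D - M.map Prod.fst) :
    x.2 - x.1 ≤ 2 * matchingCost D D' M := by
  have : (x.2 - x.1) / 2 ≤ matchingCost D D' M :=
    Multiset.le_fold_max_of_mem _ (Multiset.mem_add.mpr (.inr
      (Multiset.mem_map_of_mem _ (Multiset.mem_add.mpr (.inl hx)))))
  linarith

theorem matchingCost_swap : matchingCost D' D (M.map Prod.swap) = matchingCost D D' M := by
  simp only [matchingCost, Multiset.map_map, Function.comp_def, Prod.fst_swap, Prod.snd_swap]
  rw [add_comm (D' - _)]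
  congr 3
  funext q
  rw [abs_sub_comm q.2.1, abs_sub_comm q.2.2]

variable (h₁ : M.map Prod.fst ≤ D) (h₂ : M.map Prod.snd ≤ D')
include h₁ h₂

theorem countP_persistence_le_of_matching {r : ℝ} (hr : 2 * matchingCost D D' M < r) :
    D.countP (fun x => r ≤ x.2 - x.1) ≤
      D'.countP (fun y => r - 2 * matchingCost D D' M ≤ y.2 - y.1) := by
  have hunmatched : (D - M.map Prod.fst).countP (fun x => r ≤ x.2 - x.1) = 0 :=
    Multiset.countP_eq_zero.mpr fun x hx hrx =>
      (persistence_le_matchingCost_of_unmatched hx).not_gt (hr.trans_le hrx)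
  calc D.countP (fun x => r ≤ x.2 - x.1)
      = (M.map Prod.fst).countP (fun x => r ≤ x.2 - x.1) := by
        rw [← add_tsub_cancel_of_le h₁, Multiset.countP_add, hunmatched, add_zero]
    _ = M.countP (fun q => r ≤ q.1.2 - q.1.1) := by
        rw [Multiset.countP_map, Multiset.countP_eq_card_filter]
    _ ≤ M.countP (fun q => r - 2 * matchingCost D D' M ≤ q.2.2 - q.2.1) :=
        Multiset.countP_mono_left fun q hq hrq => by
          linarith [(abs_le.mp (abs_persistence_sub_le_matchingCost (D := D) (D' := D') hq)).1]
    _ = (M.map Prod.snd).countP (fun y => r - 2 * matchingCost D D' M ≤ y.2 - y.1) := by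
        rw [Multiset.countP_map, Multiset.countP_eq_card_filter]
    _ ≤ D'.countP (fun y => r - 2 * matchingCost D D' M ≤ y.2 - y.1) :=
        Multiset.countP_le_of_le _ h₂

theorem persistenceRank_le_add_matchingCost (hD' : IsPersistenceDiagram D') (hk : 1 ≤ k) :
    persistenceRank k D ≤ persistenceRank k D' + 2 * matchingCost D D' M := by
  by_cases hr : persistenceRank k D ≤ 2 * matchingCost D D' M
  · linarith [persistenceRank_nonneg hD' hk]
  rw [not_le] at hr
  have hc : 0 ≤ matchingCost D D' M := matchingCost_nonneg
  have hcount := (le_persistenceRank_iff hk (by linarith)).mp le_rfl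
  have hrank := (le_persistenceRank_iff (D := D') hk (sub_pos.mpr hr)).mpr
    (hcount.trans (countP_persistence_le_of_matching h₁ h₂ hr))
  linarith

theorem abs_persistenceRank_sub_le_matchingCost (hD : IsPersistenceDiagram D)
    (hD' : IsPersistenceDiagram D') (hk : 1 ≤ k) :
    |persistenceRank k D' - persistenceRank k D| ≤ 2 * matchingCost D D' M := by
  have hswap := persistenceRank_le_add_matchingCost (M := M.map Prod.swap)
    (by simpa [Multiset.map_map] using h₂) (by simpa [Multiset.map_map] using h₁) hD hk
  rw [matchingCost_swap] at hswap
  rw [abs_sub_le_iff]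
  constructor <;> linarith [persistenceRank_le_add_matchingCost h₁ h₂ hD' hk]

end Matching

theorem abs_persistenceRank_sub_le_bottleneckDist {k : ℕ} {D D' : Multiset (ℝ × ℝ)}
    (hD : IsPersistenceDiagram D) (hD' : IsPersistenceDiagram D') (hk : 1 ≤ k) :
    |persistenceRank k D' - persistenceRank k D| ≤ 2 * bottleneckDist D D' := by
  rw [← div_le_iff₀' two_pos, bottleneckDist]
  refine le_csInf ⟨_, 0, by simp, by simp, rfl⟩ ?_
  rintro _ ⟨M, h₁, h₂, rfl⟩
  rw [div_le_iff₀' two_pos]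
  exact abs_persistenceRank_sub_le_matchingCost h₁ h₂ hD hD' hk

/-- For a positive integer `m` and a persistence diagram `D` with at least `m`
points (counted with multiplicity), the hole detection score `s_m` is continuous at `D` with
respect to the bottleneck distance. -/
theorem holeDetectionScore_continuous (m : ℕ) (hm : 1 ≤ m)
    (D : Multiset (ℝ × ℝ)) (hD : IsPersistenceDiagram D) (hcard : m ≤ Multiset.card D) :
    ∀ ε : ℝ, 0 < ε → ∃ δ : ℝ, 0 < δ ∧
      ∀ D' : Multiset (ℝ × ℝ), IsPersistenceDiagram D' →
        bottleneckDist D D' < δ →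
        |holeDetectionScore m D' - holeDetectionScore m D| < ε := by
  intro ε hε
  set p := persistenceRank m D
  set q := persistenceRank (m + 1) D
  have hp : 0 < p := persistenceRank_pos hD hm hcard
  have hscore : ContinuousAt (fun z : ℝ × ℝ => (z.1 - z.2) / z.1) (p, q) :=
    (continuousAt_fst.sub continuousAt_snd).div continuousAt_fst hp.ne'
  obtain ⟨δ, hδ, hδscore⟩ := Metric.continuousAt_iff.mp hscore ε hε
  refine ⟨min δ p / 2, by positivity, fun D' hD' hdist => ?_⟩
  have hrank (k : ℕ) (hk : 1 ≤ k) : |persistenceRank k D' - persistenceRank k D| < min δ p :=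
    (abs_persistenceRank_sub_le_bottleneckDist hD hD' hk).trans_lt (by linarith)
  have hpos : 0 < persistenceRank m D' := by
    linarith [(abs_lt.mp (hrank m hm)).1, min_le_right δ p]
  have hclose : dist (persistenceRank m D', persistenceRank (m + 1) D') (p, q) < δ := by
    rw [Prod.dist_eq, Real.dist_eq, Real.dist_eq]
    exact max_lt ((hrank m hm).trans_le (min_le_left δ p))
      ((hrank (m + 1) (by omega)).trans_le (min_le_left δ p))
  rw [holeDetectionScore, holeDetectionScore, if_pos hpos, if_pos hp, ← Real.dist_eq]
  exact hδscore hclose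
end

section
/- Let G be the unweighted path graph on three vertices {0, 1, 2}, i.e., the 3×3 adjacency matrix A with a_01 = a_10 = a_12 = a_21 = 1 and all other entries 0 (so d_0 = d_2 = 1, d_1 = 2). Then the corrected effective resistance between the two distinct endpoint vertices vanishes: d^eff_{02} = 0. -/
/-!
The vector `x = e₀ - e₂` satisfies `x ᵥ* L^sym = x`: it is a left eigenvector for the eigenvalue
`1`. Hence `x` is orthogonal to every eigenvector `u_l` with `μ_l ≠ 1` (in particular to `u₀`),
so each weight `1 / μ_l` in the naive resistance may be replaced by `1`. Since `d₀ = d₂ = 1`,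
Parseval for the orthonormal basis `u` then gives `d̃^eff₀₂ = ‖x‖² = 2 = 1/d₀ + 1/d₂`, and the
remaining correction terms vanish because `a₀₂ = a₀₀ = a₂₂ = 0`.
-/

open Finset Matrix

section Spectral

variable {ι n R : Type*} [Fintype n] [Field R]

theorem dotProduct_eq_zero_of_left_right_eigenvector {S : Matrix n n R} {x u : n → R} {a b : R}
    (hx : x ᵥ* S = a • x) (hu : S *ᵥ u = b • u) (hab : a ≠ b) : x ⬝ᵥ u = 0 := by
  have h : a * (x ⬝ᵥ u) = b * (x ⬝ᵥ u) := by
    rw [← smul_eq_mul, ← smul_dotProduct, ← hx, ← dotProduct_mulVec, hu, dotProduct_smul,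
      smul_eq_mul]
  have h' : (a - b) * (x ⬝ᵥ u) = 0 := by linear_combination h
  exact (mul_eq_zero.1 h').resolve_left (sub_ne_zero.2 hab)

theorem sum_one_div_eigenvalue_mul_sq_dotProduct (s : Finset ι) {S : Matrix n n R}
    {u : ι → n → R} {μ : ι → R} (hu : ∀ l, S *ᵥ u l = μ l • u l) {x : n → R} {a : R}
    (hx : x ᵥ* S = a • x) :
    ∑ l ∈ s, 1 / μ l * (x ⬝ᵥ u l) ^ 2 = 1 / a * ∑ l ∈ s, (x ⬝ᵥ u l) ^ 2 := by
  rw [mul_sum]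
  refine sum_congr rfl fun l _ => ?_
  by_cases h : a = μ l
  · rw [h]
  · rw [dotProduct_eq_zero_of_left_right_eigenvector hx (hu l) h]
    ring

end Spectral

theorem sum_sq_dotProduct_of_orthonormal {n R : Type*} [Fintype n] [DecidableEq n] [CommRing R]
    {u : n → n → R} (hu : ∀ l m, ∑ i, u l i * u m i = if l = m then 1 else 0) (x : n → R) :
    ∑ l, (x ⬝ᵥ u l) ^ 2 = x ⬝ᵥ x := by
  have hU : (of u)ᵀ * of u = 1 := by
    refine mul_eq_one_comm.1 (ext fun l m => ?_)
    simp only [mul_apply, transpose_apply, of_apply, one_apply, hu]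
  calc ∑ l, (x ⬝ᵥ u l) ^ 2 = (of u *ᵥ x) ⬝ᵥ (of u *ᵥ x) := by
        simp only [dotProduct, mulVec, of_apply, sq, mul_comm (x _)]
    _ = x ⬝ᵥ x := by
        rw [dotProduct_mulVec, vecMul_mulVec, hU, vecMul_one]

theorem corrected_effective_resistance_path_graph_zero_general
    (A : Matrix (Fin 3) (Fin 3) ℝ)
    (hA : A = !![0, 1, 0; 1, 0, 1; 0, 1, 0])
    (deg : Fin 3 → ℝ) (hdeg : ∀ i, deg i = ∑ j, A i j)
    (Lsym : Matrix (Fin 3) (Fin 3) ℝ)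
    (hL : Lsym = 1 - (Matrix.diagonal fun i => (Real.sqrt (deg i))⁻¹) * A *
      (Matrix.diagonal fun i => (Real.sqrt (deg i))⁻¹))
    (u : Fin 3 → Fin 3 → ℝ) (μ : Fin 3 → ℝ)
    (hortho : ∀ l m, ∑ i, u l i * u m i = if l = m then (1 : ℝ) else 0)
    (heig : ∀ l, Lsym.mulVec (u l) = μ l • u l)
    (hμ0 : μ 0 = 0)
    -- naive effective resistance
    (dnaive : Fin 3 → Fin 3 → ℝ)
    (hdnaive : ∀ i j, dnaive i j = ∑ l ∈ Finset.univ.filter (fun l : Fin 3 => l ≠ 0),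
      (1 / μ l) * (u l i / Real.sqrt (deg i) - u l j / Real.sqrt (deg j)) ^ 2)
    -- corrected effective resistance
    (deff : Fin 3 → Fin 3 → ℝ)
    (hdeff : ∀ i j, deff i j = dnaive i j - 1 / deg i - 1 / deg j
      + 2 * A i j / (deg i * deg j) - A i i / (deg i) ^ 2 - A j j / (deg j) ^ 2) :
    deff 0 2 = 0 := by
  have hd0 : deg 0 = 1 := by simp [hdeg, hA, Fin.sum_univ_three]
  have hd1 : deg 1 = 2 := by simp [hdeg, hA, Fin.sum_univ_three]; norm_num
  have hd2 : deg 2 = 1 := by simp [hdeg, hA, Fin.sum_univ_three]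
  set x : Fin 3 → ℝ := ![1, 0, -1]
  have hx : x ᵥ* Lsym = (1 : ℝ) • x := by
    rw [hL, hA]
    ext i
    fin_cases i <;>
      simp [x, vecMul, dotProduct, Fin.sum_univ_three, mul_apply, one_apply, hd0, hd1, hd2]
  have hnaive : dnaive 0 2 = ∑ l ∈ univ.filter (· ≠ 0), 1 / μ l * (x ⬝ᵥ u l) ^ 2 := by
    simp [hdnaive, hd0, hd2, x, dotProduct, Fin.sum_univ_three, sub_eq_add_neg]
  have hx0 : x ⬝ᵥ u 0 = 0 :=
    dotProduct_eq_zero_of_left_right_eigenvector hx (hμ0 ▸ heig 0) one_ne_zero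
  have hxx : x ⬝ᵥ x = 2 := by simp [x, dotProduct, Fin.sum_univ_three]; norm_num
  have hsum : ∑ l ∈ univ.erase 0, (x ⬝ᵥ u l) ^ 2 = 2 := by
    have hparseval := sum_sq_dotProduct_of_orthonormal hortho x
    rwa [← add_sum_erase _ _ (mem_univ 0), hx0, hxx, sq, zero_mul, zero_add] at hparseval
  rw [hdeff, hnaive, sum_one_div_eigenvalue_mul_sq_dotProduct _ heig hx, filter_ne', hsum, hd0,
    hd2, hA]
  simp
  norm_num

/-- For the unweighted path graph on three vertices `0 – 1 – 2`, the corrected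
effective resistance between the two endpoint vertices vanishes: `d^eff_{02} = 0`. -/
theorem corrected_effective_resistance_path_graph_zero
    (A : Matrix (Fin 3) (Fin 3) ℝ)
    (hA : A = !![0, 1, 0; 1, 0, 1; 0, 1, 0])
    (deg : Fin 3 → ℝ) (hdeg : ∀ i, deg i = ∑ j, A i j)
    (vol : ℝ) (hvol : vol = ∑ i, deg i)
    (Lsym : Matrix (Fin 3) (Fin 3) ℝ)
    (hL : Lsym = 1 - (Matrix.diagonal fun i => (Real.sqrt (deg i))⁻¹) * A *
      (Matrix.diagonal fun i => (Real.sqrt (deg i))⁻¹))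
    (u : Fin 3 → Fin 3 → ℝ) (μ : Fin 3 → ℝ)
    (hortho : ∀ l m, ∑ i, u l i * u m i = if l = m then (1 : ℝ) else 0)
    (heig : ∀ l, Lsym.mulVec (u l) = μ l • u l)
    (hmono : Monotone μ) (hμ0 : μ 0 = 0)
    (hu0 : ∀ i, u 0 i = Real.sqrt (deg i) / Real.sqrt vol)
    (hμpos : ∀ l, l ≠ 0 → 0 < μ l)
    -- naive effective resistance
    (dnaive : Fin 3 → Fin 3 → ℝ)
    (hdnaive : ∀ i j, dnaive i j = ∑ l ∈ Finset.univ.filter (fun l : Fin 3 => l ≠ 0),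
      (1 / μ l) * (u l i / Real.sqrt (deg i) - u l j / Real.sqrt (deg j)) ^ 2)
    -- corrected effective resistance
    (deff : Fin 3 → Fin 3 → ℝ)
    (hdeff : ∀ i j, deff i j = dnaive i j - 1 / deg i - 1 / deg j
      + 2 * A i j / (deg i * deg j) - A i i / (deg i) ^ 2 - A j j / (deg j) ^ 2) :
    deff 0 2 = 0 :=
  corrected_effective_resistance_path_graph_zero_general A hA deg hdeg Lsym hL u μ hortho heig hμ0
    dnaive hdnaive deff hdeff
end

section
/- Let G be the unweighted graph on five vertices {0, 1, 2, 3, 4} whose edges (all of weight 1) are {0,1}, {1,2}, {0,2}, {2,3}, {3,4} (a triangle on {0,1,2} with a path 2–3–4 attached). Then the corrected effective resistances satisfy d^eff_{02} = 1/6, d^eff_{24} = 2/3, and d^eff_{04} = 7/6; in particular d^eff_{04} > d^eff_{02} + d^eff_{24}, so the corrected effective resistance violates the triangle inequality. -/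
/-!
With `G i k = ∑_{l ≥ 2} μ_l⁻¹ (u_l i / √d_i) (u_l k / √d_k)`, the naive resistance is
`G i i + G j j - 2 G i j`. For `l ≥ 2` the vector `D^{-1/2} u_l` satisfies
`(D - A) D^{-1/2} u_l = μ_l D^{1/2} u_l` and is orthogonal to the degree vector `d`, so
completeness of the `u_l` shows that `G + J / vol` (with `J` the all-ones matrix) inverts the
augmented Laplacian `C = D - A + d dᵀ / vol`; the `J` part cancels in the resistance. For the
triangle with a tail, `C` has an explicit rational inverse `X`, giving naive resistances
`2/3`, `2`, `8/3` for the pairs `02`, `24`, `04`, and the corrections yield `1/6`, `2/3`, `7/6`.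
-/

open Finset Matrix

section Resistance

variable {ι : Type*} [Fintype ι] [DecidableEq ι]

noncomputable def greenMatrix (u : ι → ι → ℝ) (μ d : ι → ℝ) (o : ι) : Matrix ι ι ℝ :=
  of fun i k => ∑ l ∈ univ.filter (· ≠ o), (1 / μ l) * (u l i / √(d i)) * (u l k / √(d k))

noncomputable def augmentedLaplacian (A : Matrix ι ι ℝ) (d : ι → ℝ) (vol : ℝ) : Matrix ι ι ℝ :=
  diagonal d - A + vol⁻¹ • vecMulVec d d

lemma sum_inv_mul_sub_sq_eq_greenMatrix (u : ι → ι → ℝ) (μ d : ι → ℝ) (o i j : ι) :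
    ∑ l ∈ univ.filter (· ≠ o), (1 / μ l) * (u l i / √(d i) - u l j / √(d j)) ^ 2 =
      greenMatrix u μ d o i i + greenMatrix u μ d o j j - 2 * greenMatrix u μ d o i j := by
  simp only [greenMatrix, of_apply, mul_sum, ← sum_add_distrib, ← sum_sub_distrib]
  exact sum_congr rfl fun l _ => by ring

lemma sum_filter_ne_mul_eq_of_orthonormal {u : ι → ι → ℝ}
    (hu : ∀ l m, ∑ i, u l i * u m i = if l = m then 1 else 0) (o i k : ι) :
    ∑ l ∈ univ.filter (· ≠ o), u l i * u l k = (if i = k then 1 else 0) - u o i * u o k := by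
  have hU : of u * (of u)ᵀ = 1 := by
    ext l m
    simpa [mul_apply, one_apply] using hu l m
  have hU' : (of u)ᵀ * of u = 1 := mul_eq_one_comm.mp hU
  have hcol : ∑ l, u l i * u l k = if i = k then 1 else 0 := by
    simpa [mul_apply, one_apply] using congrFun (congrFun hU' i) k
  rw [filter_ne', sum_erase_eq_sub (mem_univ o), hcol]

lemma mul_greenMatrix_apply {C : Matrix ι ι ℝ} {u : ι → ι → ℝ} {μ d : ι → ℝ} {o : ι}
    (hμ : ∀ l, l ≠ o → μ l ≠ 0)
    (hC : ∀ l, l ≠ o → C *ᵥ (fun j => u l j / √(d j)) = fun i => μ l * (√(d i) * u l i))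
    (i k : ι) :
    (C * greenMatrix u μ d o) i k =
      √(d i) / √(d k) * ∑ l ∈ univ.filter (· ≠ o), u l i * u l k := by
  simp only [mul_apply, greenMatrix, of_apply, mul_sum]
  rw [sum_comm]
  refine sum_congr rfl fun l hl => ?_
  have hl : l ≠ o := (mem_filter.mp hl).2
  have hCl := congrFun (hC l hl) i
  simp only [mulVec, dotProduct] at hCl
  calc ∑ j, C i j * (1 / μ l * (u l j / √(d j)) * (u l k / √(d k)))
      = 1 / μ l * (u l k / √(d k)) * ∑ j, C i j * (u l j / √(d j)) := by
        rw [mul_sum]; exact sum_congr rfl fun j _ => by ring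
    _ = √(d i) / √(d k) * (u l i * u l k) := by
        rw [hCl]; field_simp [hμ l hl]

lemma adj_mulVec_of_normalizedLaplacian_eigen {A : Matrix ι ι ℝ} {d : ι → ℝ}
    (hd : ∀ i, 0 < d i) {v : ι → ℝ} {m : ℝ}
    (hv : (1 - diagonal (fun i => (√(d i))⁻¹) * A * diagonal (fun i => (√(d i))⁻¹)) *ᵥ v =
      m • v) :
    A *ᵥ (fun j => v j / √(d j)) = fun i => (1 - m) * (√(d i) * v i) := by
  funext i
  have hsd : √(d i) ≠ 0 := (Real.sqrt_pos.mpr (hd i)).ne'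
  have h := congrFun hv i
  rw [sub_mulVec, one_mulVec, ← mulVec_mulVec, ← mulVec_mulVec] at h
  simp only [Pi.sub_apply, Pi.smul_apply, smul_eq_mul, mulVec_diagonal] at h
  have hw : diagonal (fun j => (√(d j))⁻¹) *ᵥ v = fun j => v j / √(d j) := by
    funext j; rw [mulVec_diagonal]; ring
  rw [hw] at h
  field_simp at h
  linear_combination -h

lemma mul_div_sqrt (x y : ℝ) : x * (y / √x) = √x * y := by
  rw [← mul_div_assoc, mul_div_right_comm, Real.div_sqrt]

lemma augmentedLaplacian_mulVec_of_eigen {A : Matrix ι ι ℝ} {d : ι → ℝ} (vol : ℝ)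
    (hd : ∀ i, 0 < d i) {v : ι → ℝ} {m : ℝ}
    (hv : (1 - diagonal (fun i => (√(d i))⁻¹) * A * diagonal (fun i => (√(d i))⁻¹)) *ᵥ v =
      m • v) (horth : ∑ j, √(d j) * v j = 0) :
    augmentedLaplacian A d vol *ᵥ (fun j => v j / √(d j)) = fun i => m * (√(d i) * v i) := by
  have hdot : d ⬝ᵥ (fun j => v j / √(d j)) = 0 := by
    rw [← horth]
    exact sum_congr rfl fun j _ => mul_div_sqrt _ _
  funext i
  rw [augmentedLaplacian, add_mulVec, sub_mulVec, adj_mulVec_of_normalizedLaplacian_eigen hd hv,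
    smul_mulVec, vecMulVec_mulVec, hdot]
  simp only [Pi.add_apply, Pi.sub_apply, mulVec_diagonal, MulOpposite.op_zero, zero_smul,
    smul_zero, Pi.zero_apply, add_zero, mul_div_sqrt]
  ring

lemma augmentedLaplacian_mulVec_one {A : Matrix ι ι ℝ} {d : ι → ℝ} {vol : ℝ}
    (hrow : ∀ i, d i = ∑ j, A i j) (hvol : vol = ∑ i, d i) (hvol0 : vol ≠ 0) :
    augmentedLaplacian A d vol *ᵥ 1 = d := by
  funext i
  have hA1 : (A *ᵥ 1) i = d i := by simp [mulVec, dotProduct, hrow]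
  have hd1 : d ⬝ᵥ 1 = vol := by simp [dotProduct, hvol]
  simp only [augmentedLaplacian, add_mulVec, sub_mulVec, smul_mulVec, vecMulVec_mulVec,
    Pi.add_apply, Pi.sub_apply, Pi.smul_apply, mulVec_diagonal, hA1, hd1]
  rw [Pi.one_apply, mul_one, sub_self, zero_add, op_smul_eq_smul, smul_smul,
    inv_mul_cancel₀ hvol0, one_smul]

theorem augmentedLaplacian_mul_greenMatrix_add {A : Matrix ι ι ℝ} {d : ι → ℝ} {vol : ℝ}
    {u : ι → ι → ℝ} {μ : ι → ℝ} {o : ι}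
    (hd : ∀ i, 0 < d i) (hrow : ∀ i, d i = ∑ j, A i j) (hvol : vol = ∑ i, d i)
    (hortho : ∀ l m, ∑ i, u l i * u m i = if l = m then 1 else 0)
    (heig : ∀ l, (1 - diagonal (fun i => (√(d i))⁻¹) * A * diagonal (fun i => (√(d i))⁻¹)) *ᵥ
      u l = μ l • u l)
    (hu0 : ∀ i, u o i = √(d i) / √vol) (hμ : ∀ l, l ≠ o → μ l ≠ 0) :
    augmentedLaplacian A d vol * (greenMatrix u μ d o + vol⁻¹ • of fun _ _ => 1) = 1 := by
  have hvol0 : 0 < vol := hvol ▸ sum_pos (fun i _ => hd i) ⟨o, mem_univ o⟩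
  have hsd : ∀ i, √(d i) ≠ 0 := fun i => (Real.sqrt_pos.mpr (hd i)).ne'
  have horth : ∀ l, l ≠ o → ∑ j, √(d j) * u l j = 0 := by
    intro l hl
    have h := hortho o l
    rw [if_neg (Ne.symm hl)] at h
    simp only [hu0, div_mul_eq_mul_div, ← sum_div] at h
    exact (div_eq_zero_iff.mp h).resolve_right (Real.sqrt_pos.mpr hvol0).ne'
  have hu0u0 : ∀ i k, u o i * u o k = √(d i) * √(d k) / vol := by
    intro i k
    rw [hu0, hu0, div_mul_div_comm, Real.mul_self_sqrt hvol0.le]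
  ext i k
  have hG := mul_greenMatrix_apply hμ
    (fun l hl => augmentedLaplacian_mulVec_of_eigen vol hd (heig l) (horth l hl)) i k
  have hJ : (augmentedLaplacian A d vol * of fun _ _ => (1 : ℝ) : Matrix ι ι ℝ) i k = d i := by
    simpa [mul_apply, mulVec, dotProduct] using
      congrFun (augmentedLaplacian_mulVec_one hrow hvol hvol0.ne') i
  rw [mul_add, Matrix.add_apply, Matrix.mul_smul, Matrix.smul_apply, smul_eq_mul, hG, hJ,
    sum_filter_ne_mul_eq_of_orthonormal hortho, hu0u0, one_apply]
  have hcancel : √(d i) / √(d k) * (√(d i) * √(d k) / vol) = d i / vol := by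
    field_simp [hsd k]
    exact Real.sq_sqrt (hd i).le
  rw [mul_sub, hcancel]
  split_ifs with hik
  · rw [hik, div_self (hsd k)]
    ring
  · ring

theorem sum_inv_mul_sub_sq_eq_of_mul_augmentedLaplacian_eq_one {A : Matrix ι ι ℝ} {d : ι → ℝ}
    {vol : ℝ} {u : ι → ι → ℝ} {μ : ι → ℝ} {o : ι}
    (hd : ∀ i, 0 < d i) (hrow : ∀ i, d i = ∑ j, A i j) (hvol : vol = ∑ i, d i)
    (hortho : ∀ l m, ∑ i, u l i * u m i = if l = m then 1 else 0)
    (heig : ∀ l, (1 - diagonal (fun i => (√(d i))⁻¹) * A * diagonal (fun i => (√(d i))⁻¹)) *ᵥ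
      u l = μ l • u l)
    (hu0 : ∀ i, u o i = √(d i) / √vol) (hμ : ∀ l, l ≠ o → μ l ≠ 0)
    {X : Matrix ι ι ℝ} (hX : X * augmentedLaplacian A d vol = 1) (i j : ι) :
    ∑ l ∈ univ.filter (· ≠ o), (1 / μ l) * (u l i / √(d i) - u l j / √(d j)) ^ 2 =
      X i i + X j j - 2 * X i j := by
  have hXG : X = greenMatrix u μ d o + vol⁻¹ • of fun _ _ => 1 :=
    left_inv_eq_right_inv hX
      (augmentedLaplacian_mul_greenMatrix_add hd hrow hvol hortho heig hu0 hμ)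
  rw [sum_inv_mul_sub_sq_eq_greenMatrix, hXG]
  simp only [Matrix.add_apply, Matrix.smul_apply, of_apply]
  ring

end Resistance

def triangleWithTail : Matrix (Fin 5) (Fin 5) ℝ :=
  !![0, 1, 1, 0, 0;
     1, 0, 1, 0, 0;
     1, 1, 0, 1, 0;
     0, 0, 1, 0, 1;
     0, 0, 0, 1, 0]

noncomputable def triangleWithTailAugmentedInv : Matrix (Fin 5) (Fin 5) ℝ :=
  !![41/75, 16/75, 2/25, -11/50, -8/25;
     16/75, 41/75, 2/25, -11/50, -8/25;
     2/25, 2/25, 7/25, -1/50, -3/25;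
     -11/50, -11/50, -1/50, 17/25, 29/50;
     -8/25, -8/25, -3/25, 29/50, 37/25]

lemma triangleWithTailAugmentedInv_mul :
    triangleWithTailAugmentedInv * augmentedLaplacian triangleWithTail ![2, 2, 3, 2, 1] 10 = 1 := by
  ext i k
  fin_cases i <;> fin_cases k <;>
    norm_num [triangleWithTailAugmentedInv, triangleWithTail, augmentedLaplacian, mul_apply,
      Fin.sum_univ_five, vecMulVec_apply, one_apply, diagonal_apply, cons_val_two, cons_val_three,
      cons_val_four] <;>
    simp [Fin.ext_iff] <;> norm_num

theorem corrected_effective_resistance_triangle_inequality_violation_general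
    (A : Matrix (Fin 5) (Fin 5) ℝ)
    (hA : A = !![0, 1, 1, 0, 0;
                 1, 0, 1, 0, 0;
                 1, 1, 0, 1, 0;
                 0, 0, 1, 0, 1;
                 0, 0, 0, 1, 0])
    (deg : Fin 5 → ℝ) (hdeg : ∀ i, deg i = ∑ j, A i j)
    (vol : ℝ) (hvol : vol = ∑ i, deg i)
    (Lsym : Matrix (Fin 5) (Fin 5) ℝ)
    (hL : Lsym = 1 - (Matrix.diagonal fun i => (Real.sqrt (deg i))⁻¹) * A *
      (Matrix.diagonal fun i => (Real.sqrt (deg i))⁻¹))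
    (u : Fin 5 → Fin 5 → ℝ) (μ : Fin 5 → ℝ)
    (hortho : ∀ l m, ∑ i, u l i * u m i = if l = m then (1 : ℝ) else 0)
    (heig : ∀ l, Lsym.mulVec (u l) = μ l • u l)
    (hu0 : ∀ i, u 0 i = Real.sqrt (deg i) / Real.sqrt vol)
    (hμpos : ∀ l, l ≠ 0 → 0 < μ l)
    -- naive effective resistance
    (dnaive : Fin 5 → Fin 5 → ℝ)
    (hdnaive : ∀ i j, dnaive i j = ∑ l ∈ Finset.univ.filter (fun l : Fin 5 => l ≠ 0),
      (1 / μ l) * (u l i / Real.sqrt (deg i) - u l j / Real.sqrt (deg j)) ^ 2)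
    -- corrected effective resistance
    (deff : Fin 5 → Fin 5 → ℝ)
    (hdeff : ∀ i j, deff i j = dnaive i j - 1 / deg i - 1 / deg j
      + 2 * A i j / (deg i * deg j) - A i i / (deg i) ^ 2 - A j j / (deg j) ^ 2) :
    deff 0 2 = 1 / 6 ∧ deff 2 4 = 2 / 3 ∧ deff 0 4 = 7 / 6 ∧
      deff 0 2 + deff 2 4 < deff 0 4 := by
  obtain rfl : A = triangleWithTail := hA
  obtain rfl : deg = ![2, 2, 3, 2, 1] := by
    funext i
    fin_cases i <;>
      norm_num [hdeg, triangleWithTail, Fin.sum_univ_five, cons_val_two, cons_val_three,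
        cons_val_four]
  obtain rfl : vol = 10 := by
    norm_num [hvol, Fin.sum_univ_five, cons_val_two, cons_val_three, cons_val_four]
  subst hL
  have hd : ∀ i, 0 < (![2, 2, 3, 2, 1] : Fin 5 → ℝ) i := by
    intro i; fin_cases i <;> norm_num
  have hnaive i j := (hdnaive i j).trans <|
    sum_inv_mul_sub_sq_eq_of_mul_augmentedLaplacian_eq_one hd hdeg hvol hortho heig hu0
      (fun l hl => (hμpos l hl).ne') triangleWithTailAugmentedInv_mul i j
  have h02 : deff 0 2 = 1 / 6 := by
    norm_num [hdeff, hnaive, triangleWithTail, triangleWithTailAugmentedInv, cons_val_two,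
      cons_val_three, cons_val_four]
  have h24 : deff 2 4 = 2 / 3 := by
    norm_num [hdeff, hnaive, triangleWithTail, triangleWithTailAugmentedInv, cons_val_two,
      cons_val_three, cons_val_four]
  have h04 : deff 0 4 = 7 / 6 := by
    norm_num [hdeff, hnaive, triangleWithTail, triangleWithTailAugmentedInv, cons_val_two,
      cons_val_three, cons_val_four]
  refine ⟨h02, h24, h04, ?_⟩
  rw [h02, h24, h04]
  norm_num

/-- For the unweighted graph on five vertices consisting of a triangle
`{0,1,2}` with a path `2 – 3 – 4` attached, the corrected effective resistances satisfy
`d^eff_{02} = 1/6`, `d^eff_{24} = 2/3`, `d^eff_{04} = 7/6`; in particular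
`d^eff_{04} > d^eff_{02} + d^eff_{24}`, violating the triangle inequality. -/
theorem corrected_effective_resistance_triangle_inequality_violation
    (A : Matrix (Fin 5) (Fin 5) ℝ)
    (hA : A = !![0, 1, 1, 0, 0;
                 1, 0, 1, 0, 0;
                 1, 1, 0, 1, 0;
                 0, 0, 1, 0, 1;
                 0, 0, 0, 1, 0])
    (deg : Fin 5 → ℝ) (hdeg : ∀ i, deg i = ∑ j, A i j)
    (vol : ℝ) (hvol : vol = ∑ i, deg i)
    (Lsym : Matrix (Fin 5) (Fin 5) ℝ)
    (hL : Lsym = 1 - (Matrix.diagonal fun i => (Real.sqrt (deg i))⁻¹) * A *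
      (Matrix.diagonal fun i => (Real.sqrt (deg i))⁻¹))
    (u : Fin 5 → Fin 5 → ℝ) (μ : Fin 5 → ℝ)
    (hortho : ∀ l m, ∑ i, u l i * u m i = if l = m then (1 : ℝ) else 0)
    (heig : ∀ l, Lsym.mulVec (u l) = μ l • u l)
    (hmono : Monotone μ) (hμ0 : μ 0 = 0)
    (hu0 : ∀ i, u 0 i = Real.sqrt (deg i) / Real.sqrt vol)
    (hμpos : ∀ l, l ≠ 0 → 0 < μ l)
    -- naive effective resistance
    (dnaive : Fin 5 → Fin 5 → ℝ)
    (hdnaive : ∀ i j, dnaive i j = ∑ l ∈ Finset.univ.filter (fun l : Fin 5 => l ≠ 0),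
      (1 / μ l) * (u l i / Real.sqrt (deg i) - u l j / Real.sqrt (deg j)) ^ 2)
    -- corrected effective resistance
    (deff : Fin 5 → Fin 5 → ℝ)
    (hdeff : ∀ i j, deff i j = dnaive i j - 1 / deg i - 1 / deg j
      + 2 * A i j / (deg i * deg j) - A i i / (deg i) ^ 2 - A j j / (deg j) ^ 2) :
    deff 0 2 = 1 / 6 ∧ deff 2 4 = 2 / 3 ∧ deff 0 4 = 7 / 6 ∧
      deff 0 2 + deff 2 4 < deff 0 4 :=
  corrected_effective_resistance_triangle_inequality_violation_general A hA deg hdeg vol hvol Lsym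
    hL u μ hortho heig hu0 hμpos dnaive hdnaive deff hdeff
end
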